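/- arXiv:1404.0985 — 4 statements merged into one kernel-verified Lean document; each statement's English description precedes it below -/
import Mathlib

section
/- Let μ ≥ 0 and ε ≥ 0, and set F_{μ,ε}(ξ) := μ|ξ|²/(1 + ε|ξ|²) for ξ ∈ ℝ². If η₁, η₂, η₃, η₄ ∈ ℝ² satisfy η₁ + η₂ = η₃ + η₄ and |η₁|² + |η₂|² = |η₃|² + |η₄|², then F_{μ,ε}(η₁) ≤ F_{μ,ε}(η₂) + F_{μ,ε}(η₃) + F_{μ,ε}(η₄). -/
open MeasureTheory Complex

noncomputable section

abbrev R2 := EuclideanSpace ℝ (Fin 2)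

lemma weight_key (μ ε a b c : ℝ) (hμ : 0 ≤ μ) (hε : 0 ≤ ε)
    (ha : 0 ≤ a) (hb : 0 ≤ b) (hc : 0 ≤ c) (h : a ≤ b + c) :
    μ * a / (1 + ε * a) ≤ μ * b / (1 + ε * b) + μ * c / (1 + ε * c) := by
  have pa : 0 < 1 + ε * a := by positivity
  have pb : 0 < 1 + ε * b := by positivity
  have pc : 0 < 1 + ε * c := by positivity
  rw [div_add_div _ _ (ne_of_gt pb) (ne_of_gt pc), div_le_div_iff₀ pa (by positivity)]
  nlinarith [mul_nonneg (mul_nonneg hμ hε) (mul_nonneg hb hc),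
    mul_nonneg hε (mul_nonneg hb hc), mul_nonneg (mul_nonneg hμ (mul_nonneg hε hε)) (mul_nonneg (mul_nonneg ha hb) hc),
    mul_nonneg hμ (sub_nonneg.mpr h), mul_nonneg (mul_nonneg hμ hε) (mul_nonneg ha (sub_nonneg.mpr h))]

/-- the weight `F_{μ,ε}(ξ) = μ|ξ|²/(1+ε|ξ|²)` satisfies
`F(η₁) ≤ F(η₂) + F(η₃) + F(η₄)` on the resonance set. -/
theorem weight_subadditive (μ ε : ℝ) (hμ : 0 ≤ μ) (hε : 0 ≤ ε)
    (η₁ η₂ η₃ η₄ : R2) (hsum : η₁ + η₂ = η₃ + η₄)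
    (hnorm : ‖η₁‖ ^ 2 + ‖η₂‖ ^ 2 = ‖η₃‖ ^ 2 + ‖η₄‖ ^ 2) :
    μ * ‖η₁‖ ^ 2 / (1 + ε * ‖η₁‖ ^ 2) ≤
      μ * ‖η₂‖ ^ 2 / (1 + ε * ‖η₂‖ ^ 2) + μ * ‖η₃‖ ^ 2 / (1 + ε * ‖η₃‖ ^ 2) +
        μ * ‖η₄‖ ^ 2 / (1 + ε * ‖η₄‖ ^ 2) := by
  have h2 : (0:ℝ) ≤ ‖η₂‖ ^ 2 := by positivity
  have key := weight_key μ ε (‖η₁‖ ^ 2) (‖η₃‖ ^ 2) (‖η₄‖ ^ 2) hμ hε (by positivity)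
    (by positivity) (by positivity) (by linarith)
  have h2' : 0 ≤ μ * ‖η₂‖ ^ 2 / (1 + ε * ‖η₂‖ ^ 2) := by positivity
  linarith

end
end

section
/- Let g : ℝ² → ℂ be twice continuously differentiable and suppose that g(x) + g(y) = g(w) + g(z) for every quadruple x, y, w, z ∈ ℝ² with x + y = w + z and |x|² + |y|² = |w|² + |z|². Then there exist a, c ∈ ℂ and b ∈ ℂ² such that g(x) = a|x|² + b·x + c for all x ∈ ℝ². -/
noncomputable section

/-!
Testing the equation on the quadruple `(t, 0), (0, s), (0, 0), (t, s)` separates the variables: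
`g (t, s) = φ t + ψ s - g 0` with `φ, ψ` the restrictions of `g` to the axes. Testing it on
`(p, q + a), (p, q - a), (p - a, q), (p + a, q)` then shows that the second differences
`φ (p + a) + φ (p - a) - 2 φ p` and `ψ (q + a) + ψ (q - a) - 2 ψ q` depend on `a` alone and
agree. Differentiating in `p`, the continuous `φ'` solves Jensen's equation, so it is affine,
and `φ` (likewise `ψ`) is a quadratic polynomial; the leading coefficients agree since the
second differences do.
-/

section SecondDifference

variable {E : Type*} [NormedAddCommGroup E] [NormedSpace ℝ E]

theorem deriv_add_deriv_eq_two_nsmul_of_secondDiff {f : ℝ → E} (hf : Differentiable ℝ f)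
    {C : ℝ → E} (h : ∀ p a, f (p + a) + f (p - a) = 2 • f p + C a) (p a : ℝ) :
    deriv f (p + a) + deriv f (p - a) = 2 • deriv f p := by
  have hL : HasDerivAt (fun q => f (q + a) + f (q - a)) (deriv f (p + a) + deriv f (p - a)) p :=
    (hf _).hasDerivAt.comp_add_const.add (hf _).hasDerivAt.comp_sub_const
  have hR : HasDerivAt (fun q => 2 • f q + C a) (2 • deriv f p) p :=
    ((hf p).hasDerivAt.const_smul 2).add_const _
  simp only [h] at hL
  exact hL.unique hR

theorem eq_add_smul_of_jensen {u : ℝ → E} (hu : Continuous u)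
    (h : ∀ p a, u (p + a) + u (p - a) = 2 • u p) (t : ℝ) :
    u t = u 0 + t • (u 1 - u 0) := by
  let A : ℝ →+ E := AddMonoidHom.mk' (fun t => u t - u 0) fun x y => by
    have hxy := h ((x + y) / 2) ((x - y) / 2)
    have hxy0 := h ((x + y) / 2) ((x + y) / 2)
    rw [add_halves, sub_self] at hxy0
    rw [show (x + y) / 2 + (x - y) / 2 = x by ring,
      show (x + y) / 2 - (x - y) / 2 = y by ring] at hxy
    linear_combination (norm := module) hxy0 - hxy
  have hA := map_real_smul A (hu.sub continuous_const) t 1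
  simp only [AddMonoidHom.mk'_apply, smul_eq_mul, mul_one, A] at hA
  rw [← hA]
  abel

theorem eq_quadratic_of_deriv_eq_affine {f : ℝ → E} (hf : Differentiable ℝ f) {β γ : E}
    (h : ∀ t, deriv f t = β + t • γ) (t : ℝ) : f t = f 0 + t • β + (t ^ 2 / 2) • γ := by
  have hq (s : ℝ) : HasDerivAt (fun s : ℝ => s • β + (s ^ 2 / 2) • γ) (β + s • γ) s := by
    have hsq : HasDerivAt (fun s : ℝ => s ^ 2 / 2) s s := by
      simpa using (hasDerivAt_pow 2 s).div_const 2
    simpa using ((hasDerivAt_id s).smul_const β).fun_add (hsq.smul_const γ)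
  have hd (s : ℝ) : deriv (fun s => f s - (s • β + (s ^ 2 / 2) • γ)) s = 0 := by
    rw [deriv_fun_sub (hf s) (hq s).differentiableAt, (hq s).deriv, h, sub_self]
  have hconst := is_const_of_deriv_eq_zero (fun s => (hf s).sub (hq s).differentiableAt) hd t 0
  simp only [Pi.sub_apply, zero_smul, ne_eq, OfNat.ofNat_ne_zero, not_false_eq_true, zero_pow,
    zero_div, add_zero, sub_zero] at hconst
  rw [← hconst]
  abel

theorem exists_eq_quadratic_of_secondDiff {f : ℝ → E} (hf : ContDiff ℝ 2 f) {C : ℝ → E}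
    (h : ∀ p a, f (p + a) + f (p - a) = 2 • f p + C a) :
    ∃ β γ : E, ∀ t : ℝ, f t = f 0 + t • β + (t ^ 2 / 2) • γ := by
  have hd : Differentiable ℝ f := hf.differentiable (by norm_num)
  refine ⟨deriv f 0, deriv f 1 - deriv f 0, eq_quadratic_of_deriv_eq_affine hd fun t => ?_⟩
  exact eq_add_smul_of_jensen (hf.continuous_deriv (by norm_num))
    (deriv_add_deriv_eq_two_nsmul_of_secondDiff hd h) t

theorem secondDiff_eq_of_eq_quadratic {f : ℝ → E} {β γ : E}
    (h : ∀ t : ℝ, f t = f 0 + t • β + (t ^ 2 / 2) • γ) (a : ℝ) :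
    f a + f (-a) - 2 • f 0 = a ^ 2 • γ := by
  rw [h a, h (-a)]
  module

end SecondDifference

theorem euclidean_vec_two_add (a b c d : ℝ) : !₂[a, b] + !₂[c, d] = !₂[a + c, b + d] := by
  rw [← WithLp.toLp_add, Matrix.cons_add_cons, Matrix.cons_add_cons, Matrix.empty_add_empty]

theorem norm_euclidean_vec_two_sq (a b : ℝ) : ‖!₂[a, b]‖ ^ 2 = a ^ 2 + b ^ 2 := by
  simp [EuclideanSpace.real_norm_sq_eq, Fin.sum_univ_two]

theorem contDiff_euclidean_vec_two {n : WithTop ℕ∞} {u v : ℝ → ℝ} (hu : ContDiff ℝ n u)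
    (hv : ContDiff ℝ n v) : ContDiff ℝ n fun t => !₂[u t, v t] :=
  PiLp.contDiff_toLp.comp (contDiff_pi.2 fun i => by fin_cases i <;> simpa)

section Admissible

variable {M : Type*} [AddCommGroup M] {g : R2 → M}

theorem apply_eq_add_sub_of_admissible
    (hg : ∀ x y w z : R2, x + y = w + z → ‖x‖ ^ 2 + ‖y‖ ^ 2 = ‖w‖ ^ 2 + ‖z‖ ^ 2 →
      g x + g y = g w + g z) (t s : ℝ) :
    g !₂[t, s] = g !₂[t, 0] + g !₂[0, s] - g !₂[0, 0] := by
  have h := hg !₂[t, 0] !₂[0, s] !₂[0, 0] !₂[t, s]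
    (by simp only [euclidean_vec_two_add, add_zero, zero_add])
    (by simp only [norm_euclidean_vec_two_sq]; ring)
  rw [h]
  abel

theorem secondDiff_fst_eq_secondDiff_snd
    (hg : ∀ x y w z : R2, x + y = w + z → ‖x‖ ^ 2 + ‖y‖ ^ 2 = ‖w‖ ^ 2 + ‖z‖ ^ 2 →
      g x + g y = g w + g z) (p q a : ℝ) :
    g !₂[p + a, 0] + g !₂[p - a, 0] - 2 • g !₂[p, 0] =
      g !₂[0, q + a] + g !₂[0, q - a] - 2 • g !₂[0, q] := by
  have h := hg !₂[p, q + a] !₂[p, q - a] !₂[p - a, q] !₂[p + a, q]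
    (by rw [euclidean_vec_two_add, euclidean_vec_two_add, show p + p = p - a + (p + a) by ring,
      show q + a + (q - a) = q + q by ring])
    (by simp only [norm_euclidean_vec_two_sq]; ring)
  rw [apply_eq_add_sub_of_admissible hg p (q + a), apply_eq_add_sub_of_admissible hg p (q - a),
    apply_eq_add_sub_of_admissible hg (p - a) q, apply_eq_add_sub_of_admissible hg (p + a) q] at h
  linear_combination (norm := module) -h

end Admissible

/-- a `C²` solution `g : ℝ² → ℂ` of the additive functional equation
`g(x) + g(y) = g(w) + g(z)` on admissible quadruples is a quadratic polynomial
`g(x) = a|x|² + b·x + c`. -/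
theorem additive_functional_equation_quadratic (g : R2 → ℂ) (hg : ContDiff ℝ 2 g)
    (hfun : ∀ x y w z : R2, x + y = w + z → ‖x‖ ^ 2 + ‖y‖ ^ 2 = ‖w‖ ^ 2 + ‖z‖ ^ 2 →
      g x + g y = g w + g z) :
    ∃ (a c : ℂ) (b : Fin 2 → ℂ), ∀ x : R2,
      g x = a * ((‖x‖ ^ 2 : ℝ) : ℂ) + (∑ i, b i * ((x i : ℝ) : ℂ)) + c := by
  have hsec := secondDiff_fst_eq_secondDiff_snd hfun
  obtain ⟨β₁, γ₁, hφ⟩ := exists_eq_quadratic_of_secondDiff (f := fun t => g !₂[t, 0])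
    (hg.comp (contDiff_euclidean_vec_two contDiff_id contDiff_const))
    fun p a => by simpa [sub_eq_iff_eq_add'] using hsec p 0 a
  obtain ⟨β₂, γ₂, hψ⟩ := exists_eq_quadratic_of_secondDiff (f := fun s => g !₂[0, s])
    (hg.comp (contDiff_euclidean_vec_two contDiff_const contDiff_id))
    fun q a => by simpa [sub_eq_iff_eq_add'] using (hsec 0 q a).symm
  have hγ : γ₁ = γ₂ := by
    have h := hsec 0 0 1
    have h₁ := secondDiff_eq_of_eq_quadratic hφ 1
    have h₂ := secondDiff_eq_of_eq_quadratic hψ 1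
    simp only [zero_add, zero_sub] at h h₁ h₂
    rwa [h₁, h₂, one_pow, one_smul, one_smul] at h
  refine ⟨γ₁ / 2, g !₂[0, 0], ![β₁, β₂], fun x => ?_⟩
  have hx : x = !₂[x 0, x 1] := by ext i; fin_cases i <;> rfl
  rw [hx, apply_eq_add_sub_of_admissible hfun, hφ (x 0), hψ (x 1), ← hγ, norm_euclidean_vec_two_sq]
  simp only [Fin.sum_univ_two, Matrix.cons_val_zero, Matrix.cons_val_one, Matrix.cons_val_fin_one,
    Complex.real_smul]
  push_cast
  ring

end
end

section
/- Let f : ℝ² → ℂ be twice continuously differentiable and nowhere vanishing, and suppose that f(x) f(y) = f(w) f(z) for every quadruple x, y, w, z ∈ ℝ² with x + y = w + z and |x|² + |y|² = |w|² + |z|². Then there exist a, c ∈ ℂ and b ∈ ℂ² such that f(x) = exp(a|x|² + b·x + c) for all x ∈ ℝ². -/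
open Complex

theorem exists_eq_add_smul_of_add_add_sub_eq {E : Type*} [AddCommGroup E] [Module ℝ E]
    [TopologicalSpace E] [IsTopologicalAddGroup E] [ContinuousSMul ℝ E] [T2Space E]
    {ψ : ℝ → E} (hψ : Continuous ψ) (h : ∀ s t, ψ (s + t) + ψ (s - t) = 2 • ψ s) :
    ∃ a b : E, ∀ t, ψ t = a + t • b := by
  have hadd : ∀ s t, ψ (s + t) - ψ 0 = (ψ s - ψ 0) + (ψ t - ψ 0) := by
    intro s t
    have h₁ := h ((s + t) / 2) ((s - t) / 2)
    have h₂ := h ((s + t) / 2) ((s + t) / 2)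
    rw [show (s + t) / 2 + (s - t) / 2 = s by ring, show (s + t) / 2 - (s - t) / 2 = t by ring]
      at h₁
    rw [add_halves, sub_self, ← h₁] at h₂
    rw [eq_sub_of_add_eq h₂]
    abel
  refine ⟨ψ 0, ψ 1 - ψ 0, fun t => ?_⟩
  have := map_real_smul (AddMonoidHom.mk' (fun t => ψ t - ψ 0) hadd) (hψ.sub continuous_const) t 1
  simp only [AddMonoidHom.mk'_apply, smul_eq_mul, mul_one] at this
  rw [← this]
  abel

theorem eq_mul_cexp_sub_of_hasDerivAt {p Q Q' : ℝ → ℂ} (hp : ∀ t, HasDerivAt p (Q' t * p t) t)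
    (hQ : ∀ t, HasDerivAt Q (Q' t) t) (t : ℝ) : p t = p 0 * cexp (Q t - Q 0) := by
  have hderiv : ∀ t, HasDerivAt (fun t => p t * cexp (-Q t)) 0 t := fun t =>
    ((hp t).mul (hQ t).neg.cexp).congr_deriv (by simp only [Pi.neg_apply]; ring)
  have hconst := is_const_of_deriv_eq_zero (fun t => (hderiv t).differentiableAt)
    (fun t => (hderiv t).deriv) t 0
  calc p t = p t * cexp (-Q t) * cexp (Q t) := by
        rw [mul_assoc, ← exp_add, neg_add_cancel, exp_zero, mul_one]
    _ = p 0 * cexp (Q t - Q 0) := by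
        rw [hconst, mul_assoc, ← exp_add, neg_add_eq_sub]

theorem eq_of_forall_cexp_mul_sq_eq {a b : ℂ} (h : ∀ t : ℝ, cexp (a * t ^ 2) = cexp (b * t ^ 2)) :
    a = b := by
  have hd : ∀ c : ℂ, HasDerivWithinAt (fun s : ℝ => cexp (c * s)) c (Set.Ici 0) 0 := fun c => by
    simpa using (((hasDerivAt_id (0 : ℂ)).const_mul c).cexp.comp_ofReal).hasDerivWithinAt
  refine (uniqueDiffWithinAt_Ici 0).eq_deriv _ (hd a) ((hd b).congr (fun s hs => ?_) (by simp))
  have := h (Real.sqrt s)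
  rwa [← ofReal_pow, Real.sq_sqrt hs] at this

theorem logDeriv_add_add_logDeriv_sub {p e : ℝ → ℂ} (hp : Differentiable ℝ p)
    (hne : ∀ t, p t ≠ 0) (heq : ∀ s t, p (s + t) * p (s - t) = p s ^ 2 * e t) (s t : ℝ) :
    logDeriv p (s + t) + logDeriv p (s - t) = 2 * logDeriv p s := by
  have hleft : HasDerivAt (fun s => p (s + t) * p (s - t))
      (deriv p (s + t) * p (s - t) + p (s + t) * deriv p (s - t)) s :=
    ((hp _).hasDerivAt.comp_add_const s t).mul ((hp _).hasDerivAt.comp_sub_const s t)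
  have hright : HasDerivAt (fun s => p s ^ 2 * e t) (2 * p s * deriv p s * e t) s := by
    simpa using ((hp s).hasDerivAt.pow 2).mul_const (e t)
  have hderiv := hleft.unique (by simpa only [heq] using hright)
  have := hne (s + t)
  have := hne (s - t)
  have := hne s
  simp only [logDeriv_apply]
  field_simp
  linear_combination p s * hderiv - 2 * deriv p s * heq s t

theorem exists_cexp_of_mul_add_mul_sub {p e : ℝ → ℂ} (hp : ContDiff ℝ 1 p) (hne : ∀ t, p t ≠ 0)
    (heq : ∀ s t, p (s + t) * p (s - t) = p s ^ 2 * e t) :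
    ∃ α β : ℂ, ∀ t : ℝ, p t = p 0 * cexp (α * t ^ 2 + β * t) := by
  have hdiff := hp.differentiable one_ne_zero
  have hcont : Continuous (logDeriv p) := (hp.continuous_deriv le_rfl).div hp.continuous hne
  obtain ⟨β, γ, hlin⟩ := exists_eq_add_smul_of_add_add_sub_eq hcont fun s t => by
    rw [two_nsmul, ← two_mul]
    exact logDeriv_add_add_logDeriv_sub hdiff hne heq s t
  refine ⟨γ / 2, β, fun t => ?_⟩
  have hp' : ∀ t, HasDerivAt p ((β + t * γ) * p t) t := fun t => by
    rw [← real_smul, ← hlin, logDeriv_apply, div_mul_cancel₀ _ (hne t)]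
    exact (hdiff t).hasDerivAt
  have hQ : ∀ t : ℝ, HasDerivAt (fun t : ℝ => γ / 2 * (t : ℂ) ^ 2 + β * t) (β + t * γ) t :=
    fun t => by
      refine ((((hasDerivAt_id (t : ℂ)).pow 2).const_mul (γ / 2)).add
        ((hasDerivAt_id (t : ℂ)).const_mul β)).comp_ofReal.congr_deriv ?_
      simp only [Nat.cast_ofNat, id_eq, mul_one]
      ring
  simpa using eq_mul_cexp_sub_of_hasDerivAt hp' hQ t

def IsAdmissibleMultiplicative {E : Type*} [NormedAddCommGroup E] (f : E → ℂ) : Prop :=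
  ∀ x y w z : E, x + y = w + z → ‖x‖ ^ 2 + ‖y‖ ^ 2 = ‖w‖ ^ 2 + ‖z‖ ^ 2 → f x * f y = f w * f z

namespace IsAdmissibleMultiplicative

variable {E : Type*} [NormedAddCommGroup E] [InnerProductSpace ℝ E] {f : E → ℂ}

theorem apply_add_mul_apply_zero (hfun : IsAdmissibleMultiplicative f) {x y : E}
    (h : inner ℝ x y = 0) : f (x + y) * f 0 = f x * f y :=
  hfun _ _ _ _ (add_zero _) (by rw [norm_add_sq_real, h, norm_zero]; ring)

theorem apply_smul_mul_apply_neg_smul (hfun : IsAdmissibleMultiplicative f) {u v : E}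
    (h : ‖u‖ = ‖v‖) (t : ℝ) : f (t • u) * f (-t • u) = f (t • v) * f (-t • v) :=
  hfun _ _ _ _ (by simp [neg_smul]) (by simp [norm_smul, h])

theorem apply_add_smul_mul_apply_sub_smul (hfun : IsAdmissibleMultiplicative f) {u v : E}
    (huv : inner ℝ u v = 0) (h : ‖u‖ = ‖v‖) (s t : ℝ) :
    f ((s + t) • u) * f ((s - t) • u) * f 0 ^ 2 = f (s • u) ^ 2 * (f (t • v) * f (-t • v)) := by
  have horth : ∀ r : ℝ, inner ℝ (s • u) (r • v) = 0 := fun r => by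
    simp [inner_smul_left, inner_smul_right, huv]
  have hsum : f ((s + t) • u) * f ((s - t) • u) = f (s • u + t • v) * f (s • u + -t • v) :=
    hfun _ _ _ _ (by module) (by
      rw [norm_add_sq_real, norm_add_sq_real, horth, horth]
      simp only [norm_smul, h, mul_pow, Real.norm_eq_abs, sq_abs]
      ring)
  have hplus := hfun.apply_add_mul_apply_zero (horth t)
  have hminus := hfun.apply_add_mul_apply_zero (horth (-t))
  linear_combination f 0 ^ 2 * hsum + f (s • u + -t • v) * f 0 * hplus
    + f (s • u) * f (t • v) * hminus

theorem exists_cexp_apply_smul (hfun : IsAdmissibleMultiplicative f) (hf : ContDiff ℝ 1 f)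
    (hne : ∀ x, f x ≠ 0) {u v : E} (huv : inner ℝ u v = 0) (h : ‖u‖ = ‖v‖) :
    ∃ α β : ℂ, ∀ t : ℝ, f (t • u) = f 0 * cexp (α * t ^ 2 + β * t) := by
  have := exists_cexp_of_mul_add_mul_sub (p := fun t : ℝ => f (t • u))
    (e := fun t => f (t • v) * f (-t • v) / f 0 ^ 2) (hf.comp (contDiff_id.smul contDiff_const))
    (fun t => hne _) fun s t => by
      rw [mul_div_assoc', eq_div_iff (pow_ne_zero 2 (hne 0))]
      exact hfun.apply_add_smul_mul_apply_sub_smul huv h s t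
  simpa using this

theorem exists_cexp_apply_smul_add_smul (hfun : IsAdmissibleMultiplicative f)
    (hf : ContDiff ℝ 1 f) (hne : ∀ x, f x ≠ 0) {u v : E} (huv : inner ℝ u v = 0)
    (h : ‖u‖ = ‖v‖) :
    ∃ α β γ : ℂ, ∀ s t : ℝ,
      f (s • u + t • v) = f 0 * cexp (α * (s ^ 2 + t ^ 2) + β * s + γ * t) := by
  obtain ⟨α, β, hu⟩ := hfun.exists_cexp_apply_smul hf hne huv h
  obtain ⟨α', γ, hv⟩ := hfun.exists_cexp_apply_smul hf hne (real_inner_comm u v ▸ huv) h.symm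
  have heven : ∀ (a b : ℂ) (w : E), (∀ t : ℝ, f (t • w) = f 0 * cexp (a * t ^ 2 + b * t)) →
      ∀ t : ℝ, f (t • w) * f (-t • w) = f 0 ^ 2 * cexp (2 * a * t ^ 2) := by
    intro a b w hw t
    rw [hw, hw, mul_mul_mul_comm, ← exp_add]
    push_cast
    ring_nf
  have hα : α = α' := by
    refine mul_left_cancel₀ two_ne_zero (eq_of_forall_cexp_mul_sq_eq fun t => ?_)
    refine mul_left_cancel₀ (pow_ne_zero 2 (hne 0)) ?_
    rw [← heven _ _ _ hu, ← heven _ _ _ hv]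
    exact hfun.apply_smul_mul_apply_neg_smul h t
  refine ⟨α, β, γ, fun s t => mul_right_cancel₀ (hne 0) ?_⟩
  rw [hfun.apply_add_mul_apply_zero (by simp [inner_smul_left, inner_smul_right, huv]), hu, hv,
    hα, mul_mul_mul_comm, ← exp_add]
  ring_nf

end IsAdmissibleMultiplicative

/-- a nowhere-vanishing `C²` solution `f : ℝ² → ℂ` of the multiplicative
functional equation `f(x)f(y) = f(w)f(z)` on admissible quadruples is of the form
`f(x) = exp(a|x|² + b·x + c)`. -/
theorem multiplicative_functional_equation_gaussian (f : R2 → ℂ) (hf : ContDiff ℝ 2 f)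
    (hne : ∀ x : R2, f x ≠ 0)
    (hfun : ∀ x y w z : R2, x + y = w + z → ‖x‖ ^ 2 + ‖y‖ ^ 2 = ‖w‖ ^ 2 + ‖z‖ ^ 2 →
      f x * f y = f w * f z) :
    ∃ (a c : ℂ) (b : Fin 2 → ℂ), ∀ x : R2,
      f x = Complex.exp (a * ((‖x‖ ^ 2 : ℝ) : ℂ) + (∑ i, b i * ((x i : ℝ) : ℂ)) + c) := by
  obtain ⟨α, β, γ, hplane⟩ := IsAdmissibleMultiplicative.exists_cexp_apply_smul_add_smul hfun
    (hf.of_le one_le_two) hne (u := EuclideanSpace.single 0 1) (v := EuclideanSpace.single 1 1)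
    (by simp [EuclideanSpace.inner_single_left]) (by simp)
  refine ⟨α, log (f 0), ![β, γ], fun x => ?_⟩
  have hx : x = x 0 • EuclideanSpace.single 0 1 + x 1 • EuclideanSpace.single 1 1 := by
    ext i
    fin_cases i <;> simp
  rw [congrArg f hx, hplane, EuclideanSpace.real_norm_sq_eq, Fin.sum_univ_two, Fin.sum_univ_two,
    exp_add _ (log _), exp_log (hne 0)]
  push_cast
  rw [add_assoc, mul_comm]
end

section
/- Let f : ℝ² → ℂ be continuous, not identically zero, and suppose that f(x) f(y) = f(w) f(z) for every quadruple x, y, w, z ∈ ℝ² with x + y = w + z and |x|² + |y|² = |w|² + |z|². Then f(x) ≠ 0 for every x ∈ ℝ². -/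
/-!
The zero set `Z` of `f` is closed. Take `b ∉ Z` and `a ∈ Z` with `‖a - b‖ < √2 · dist(b, Z)`, and
let `v` be `u = a - b` turned by a right angle. Then `(a, b, b + (u + v)/2, b + (u - v)/2)` is
admissible, and the last two points lie at distance `‖u‖/√2 < dist(b, Z)` from `b`, so
`f p * f q ≠ 0 = f a * f b`.
-/

noncomputable section

open Metric Module Submodule RealInnerProductSpace

section

variable {E : Type*} [NormedAddCommGroup E] [InnerProductSpace ℝ E]

def Admissible (x y w z : E) : Prop :=
  x + y = w + z ∧ ‖x‖ ^ 2 + ‖y‖ ^ 2 = ‖w‖ ^ 2 + ‖z‖ ^ 2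

lemma admissible_add_half_smul_add_sub (b u v : E) (h : ‖v‖ = ‖u‖) :
    Admissible (b + u) b (b + (1 / 2 : ℝ) • (u + v)) (b + (1 / 2 : ℝ) • (u - v)) := by
  refine ⟨by module, ?_⟩
  simp only [norm_add_sq_real, norm_sub_sq_real, norm_smul, inner_smul_right, inner_add_right,
    inner_sub_right, mul_pow, h, Real.norm_of_nonneg (by norm_num : (0 : ℝ) ≤ 1 / 2)]
  ring

lemma norm_sq_half_smul_add_of_inner_eq_zero {u v : E} (h : ⟪u, v⟫ = 0) (hn : ‖v‖ = ‖u‖) :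
    ‖(1 / 2 : ℝ) • (u + v)‖ ^ 2 = ‖u‖ ^ 2 / 2 := by
  rw [norm_smul, mul_pow, norm_add_sq_real, h, hn, Real.norm_of_nonneg (by norm_num)]
  ring

lemma exists_inner_eq_zero_norm_eq (hE : 2 ≤ finrank ℝ E) (u : E) :
    ∃ v : E, ⟪u, v⟫ = 0 ∧ ‖v‖ = ‖u‖ := by
  have hspan : (ℝ ∙ u)ᗮ ≠ ⊥ := by
    rw [Ne, orthogonal_eq_bot_iff]
    intro htop
    have := finrank_span_le_card (R := ℝ) ({u} : Set E)
    rw [htop, finrank_top] at this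
    simp only [Set.toFinset_singleton, Finset.card_singleton] at this
    omega
  obtain ⟨w, hw, hw0⟩ := exists_mem_ne_zero_of_ne_bot hspan
  refine ⟨(‖u‖ / ‖w‖) • w, ?_, ?_⟩
  · rw [inner_smul_right, mem_orthogonal_singleton_iff_inner_right.mp hw, mul_zero]
  · rw [norm_smul, Real.norm_of_nonneg (by positivity),
      div_mul_cancel₀ _ (norm_ne_zero_iff.mpr hw0)]

lemma exists_admissible_mem_notMem_notMem (hE : 2 ≤ finrank ℝ E) {Z : Set E} (hZ : IsClosed Z)
    (hZne : Z.Nonempty) {b : E} (hb : b ∉ Z) :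
    ∃ a ∈ Z, ∃ p ∉ Z, ∃ q ∉ Z, Admissible a b p q := by
  set d := infDist b Z
  have hd : 0 < d := (hZ.notMem_iff_infDist_pos hZne).mp hb
  obtain ⟨a, haZ, hab⟩ : ∃ a ∈ Z, dist b a < √2 * d :=
    (infDist_lt_iff hZne).mp (lt_mul_left hd (by simp [Real.lt_sqrt]))
  set u := a - b
  have hu : ‖u‖ ^ 2 < 2 * d ^ 2 := by
    have h2 : ‖u‖ < √2 * d := by rwa [dist_comm, dist_eq_norm] at hab
    calc ‖u‖ ^ 2 < (√2 * d) ^ 2 := by gcongr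
      _ = 2 * d ^ 2 := by rw [mul_pow, Real.sq_sqrt zero_le_two]
  have hnotMem : ∀ w : E, ‖w‖ ^ 2 = ‖u‖ ^ 2 / 2 → b + w ∉ Z := fun w hw hwZ => by
    have hwd : ‖w‖ < d := by nlinarith [norm_nonneg w]
    have := infDist_le_dist_of_mem (x := b) hwZ
    rw [dist_self_add_right] at this
    linarith
  obtain ⟨v, huv, hvu⟩ := exists_inner_eq_zero_norm_eq hE u
  have hnorm_sub : ‖(1 / 2 : ℝ) • (u - v)‖ ^ 2 = ‖u‖ ^ 2 / 2 := by
    rw [sub_eq_add_neg]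
    exact norm_sq_half_smul_add_of_inner_eq_zero (by rw [inner_neg_right, huv, neg_zero])
      (by rw [norm_neg, hvu])
  refine ⟨a, haZ, _, hnotMem _ (norm_sq_half_smul_add_of_inner_eq_zero huv hvu),
    _, hnotMem _ hnorm_sub, ?_⟩
  simpa only [u, add_sub_cancel] using admissible_add_half_smul_add_sub b u v hvu

theorem ne_zero_of_forall_admissible_mul_eq {M₀ : Type*} [MulZeroClass M₀] [NoZeroDivisors M₀]
    [TopologicalSpace M₀] [T1Space M₀] (hE : 2 ≤ finrank ℝ E) {f : E → M₀} (hf : Continuous f)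
    (hne : ∃ x, f x ≠ 0) (hfun : ∀ x y w z, Admissible x y w z → f x * f y = f w * f z) (x : E) :
    f x ≠ 0 := by
  intro hx
  obtain ⟨b, hb⟩ := hne
  obtain ⟨a, ha, p, hp, q, hq, hadm⟩ :=
    exists_admissible_mem_notMem_notMem hE (isClosed_singleton.preimage hf) ⟨x, hx⟩ hb
  have : f p * f q = 0 := by rw [← hfun a b p q hadm, ha, zero_mul]
  exact mul_ne_zero hp hq this

end

/-- a continuous, not identically zero solution `f : ℝ² → ℂ` of the
multiplicative functional equation on admissible quadruples is nowhere vanishing. -/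
theorem multiplicative_functional_equation_nonvanishing (f : R2 → ℂ) (hf : Continuous f)
    (hne : ∃ x : R2, f x ≠ 0)
    (hfun : ∀ x y w z : R2, x + y = w + z → ‖x‖ ^ 2 + ‖y‖ ^ 2 = ‖w‖ ^ 2 + ‖z‖ ^ 2 →
      f x * f y = f w * f z) :
    ∀ x : R2, f x ≠ 0 :=
  ne_zero_of_forall_admissible_mul_eq (by simp) hf hne fun x y w z h => hfun x y w z h.1 h.2

end
end
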